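/- arXiv:2512.15496 — 2 statements merged into one kernel-verified Lean document; each statement's English description precedes it below -/
import Mathlib

section
/- Let M be a Kripke model and S a relation on its worlds satisfying (Sim_k) and the condition (Sim●⌣): if S w v and w R s, then either S w s, or there exists t with v R t and S t s. Then for every formula φ of the language with ⊤, ⊥, ∧, ∨ and the inconsistency operator ●⌣ (where w ⊩ ●⌣φ iff w ⊩ φ and some R-successor of w refutes φ), S w v and w ⊩ φ imply v ⊩ φ. -/
inductive Fm (K : Type) : Type
  | prop (k : K)
  | top
  | bot
  | and (a b : Fm K)
  | or (a b : Fm K)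
  | incons (a : Fm K)

def Sat {W K : Type} (R : W → W → Prop) (P : K → W → Prop) : W → Fm K → Prop
  | w, .prop k => P k w
  | _, .top => True
  | _, .bot => False
  | w, .and a b => Sat R P w a ∧ Sat R P w b
  | w, .or a b => Sat R P w a ∨ Sat R P w b
  | w, .incons a => Sat R P w a ∧ ∃ v, R w v ∧ ¬ Sat R P v a

theorem stmt4 {W K : Type} (R : W → W → Prop) (P : K → W → Prop)
    (S : W → W → Prop)
    (hP : ∀ k w v, S w v → P k w → P k v)
    (hOp : ∀ w v s, S w v → R w s → (S w s ∨ ∃ t, R v t ∧ S t s)) :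
    ∀ (φ : Fm K) (w v : W), S w v → Sat R P w φ → Sat R P v φ := by
  intro φ
  induction φ with
  | prop k => intro w v hS h; exact hP k w v hS h
  | top => intro w v _ _; trivial
  | and a b iha ihb =>
    intro w v hS h
    exact ⟨iha w v hS h.1, ihb w v hS h.2⟩
  | bot => intro w v _ h; exact h
  | or a b iha ihb =>
    intro w v hS h
    exact h.elim (fun h => Or.inl (iha w v hS h)) (fun h => Or.inr (ihb w v hS h))
  | incons a ih =>
    intro w v hS h
    obtain ⟨hw, s, hws, hns⟩ := h
    refine ⟨ih w v hS hw, ?_⟩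
    rcases hOp w v s hS hws with hSws | ⟨t, hvt, hSts⟩
    · exact absurd (ih w s hSws hw) hns
    · exact ⟨t, hvt, fun ht => hns (ih t s hSts ht)⟩
end

section
/- The paraconsistent negation ⌣ is not definable in the language generated by ⊤, ⊥, ∧, ∨, propositional letters, and the inconsistency operator ●⌣: there is no formula ψ of this language such that in every Kripke model and every world, ψ is satisfied exactly when ⌣p_k is satisfied (for some fixed propositional letter p_k). Concretely, in the model with worlds {w, v, u}, R = {(w,u)}, and all truth sets empty, w satisfies ⌣p_k while v does not, yet w and v are linked by a {●⌣}-simulation, and all formulas of the {●⌣}-language are preserved by {●⌣}-simulations. -/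
/-- Accessibility relation: the only arrow is from `w = 0` to `u = 2`. -/
def R7 : Fin 3 → Fin 3 → Prop := fun a b => a = 0 ∧ b = 2

/-- All truth sets are empty. -/
def P7 (K : Type) : K → Fin 3 → Prop := fun _ _ => False

/-- The relation `S = {(w,u),(w,v)}` with `w = 0`, `v = 1`, `u = 2`. -/
def S7 : Fin 3 → Fin 3 → Prop := fun a b => (a = 0 ∧ b = 2) ∨ (a = 0 ∧ b = 1)

lemma preserve {W K : Type} (R : W → W → Prop) (P : K → W → Prop) (S : W → W → Prop)
    (hP : ∀ (j : K) (w v : W), S w v → P j w → P j v)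
    (hR : ∀ w v s : W, S w v → R w s → (S w s ∨ ∃ t, R v t ∧ S t s)) :
    ∀ (φ : Fm K) (w v : W), S w v → Sat R P w φ → Sat R P v φ := by
  intro φ
  induction φ with
  | prop j => intro w v hS h; exact hP j w v hS h
  | top => intro w v _ _; trivial
  | bot => intro w v _ h; exact h
  | and a b iha ihb => intro w v hS h; exact ⟨iha w v hS h.1, ihb w v hS h.2⟩
  | or a b iha ihb =>
      intro w v hS h
      rcases h with h | h
      · exact Or.inl (iha w v hS h)
      · exact Or.inr (ihb w v hS h)
  | incons a ih =>
      intro w v hS h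
      obtain ⟨ha, s, hws, hns⟩ := h
      refine ⟨ih w v hS ha, ?_⟩
      rcases hR w v s hS hws with h' | ⟨t, hvt, hts⟩
      · exact absurd (ih w s h' ha) hns
      · exact ⟨t, hvt, fun hta => hns (ih t s hts hta)⟩

theorem stmt8 (K : Type) (k : K) :
    -- ⌣ is not definable in the {●⌣}-language:
    (¬ ∃ ψ : Fm K, ∀ (W : Type) (R : W → W → Prop) (P : K → W → Prop) (w : W),
        Sat R P w ψ ↔ ∃ v, R w v ∧ ¬ P k v) ∧
    -- in the concrete model, w = 0 satisfies ⌣p_k while v = 1 does not: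
    (∃ v, R7 0 v ∧ ¬ P7 K k v) ∧
    (¬ ∃ v, R7 1 v ∧ ¬ P7 K k v) ∧
    -- S7 is a {●⌣}-simulation linking w = 0 and v = 1:
    S7 0 1 ∧
    (∀ (j : K) (w v : Fin 3), S7 w v → P7 K j w → P7 K j v) ∧
    (∀ w v s : Fin 3, S7 w v → R7 w s → (S7 w s ∨ ∃ t, R7 v t ∧ S7 t s)) ∧
    -- and {●⌣}-simulations preserve the truth of all {●⌣}-language formulas:
    (∀ (W : Type) (R : W → W → Prop) (P : K → W → Prop) (S : W → W → Prop),
        (∀ (j : K) (w v : W), S w v → P j w → P j v) →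
        (∀ w v s : W, S w v → R w s → (S w s ∨ ∃ t, R v t ∧ S t s)) →
        ∀ (φ : Fm K) (w v : W), S w v → Sat R P w φ → Sat R P v φ) := by
  have sim1 : ∀ (j : K) (w v : Fin 3), S7 w v → P7 K j w → P7 K j v := by
    intro j w v _ h; exact h.elim
  have sim2 : ∀ w v s : Fin 3, S7 w v → R7 w s → (S7 w s ∨ ∃ t, R7 v t ∧ S7 t s) := by
    intro w v s hS hR
    left
    rcases hS with ⟨hw, _⟩ | ⟨hw, _⟩ <;> exact Or.inl ⟨hw, hR.2⟩
  refine ⟨?_, ⟨2, ⟨rfl, rfl⟩, fun h => h⟩, ?_, Or.inr ⟨rfl, rfl⟩, sim1, sim2,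
    fun W R P S hP hR => preserve R P S hP hR⟩
  · rintro ⟨ψ, hψ⟩
    have h0 : Sat R7 (P7 K) 0 ψ := (hψ (Fin 3) R7 (P7 K) 0).2 ⟨2, ⟨rfl, rfl⟩, fun h => h⟩
    have h1 : Sat R7 (P7 K) 1 ψ := preserve R7 (P7 K) S7 sim1 sim2 ψ 0 1 (Or.inr ⟨rfl, rfl⟩) h0
    obtain ⟨v, ⟨hv, _⟩, _⟩ := (hψ (Fin 3) R7 (P7 K) 1).1 h1
    exact absurd hv (by decide)
  · rintro ⟨v, ⟨hv, _⟩, _⟩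
    exact absurd hv (by decide)
end
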